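/- The clobber position oxo (path o-x-o) is equivalent to the clobber position ox (path o-x), which is the game * = {0 | 0}. -/

import Mathlib

/-!
Every capture in `ox` or `oxo` leaves stones of one colour only, hence a position without moves,
so both positions, like `*`, have the form `{0, …, 0 | 0, …, 0}` with at least one option on each
side. Any two such games `x`, `y` satisfy `x ≤ y`: a left option `0` of `x` is not `≥ y`, since `y`
has a left option `0 ≥ 0`, and symmetrically on the right.
-/

universe u

namespace SetTheory

/-- Pre-games (Conway), as in the older Mathlib's `SetTheory.PGame`, which is no longer in Mathlib. -/
inductive PGame : Type (u + 1)
  | mk : ∀ α β : Type u, (α → PGame) → (β → PGame) → PGame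

namespace PGame

/-- `(leAux x y).1` is `x ≤ y` and `(leAux x y).2` is `y ≤ x` (Conway's order). -/
noncomputable def leAux (x : PGame.{u}) : PGame.{u} → Prop × Prop :=
  PGame.rec (motive := fun _ => PGame.{u} → Prop × Prop)
    (fun _ _ _ _ IHL IHR y =>
      PGame.rec (motive := fun _ => Prop × Prop)
        (fun yl yr yL yR JL JR =>
          ((∀ i, ¬ (IHL i (mk yl yr yL yR)).2) ∧ (∀ j, ¬ (JR j).2),
           (∀ i, ¬ (JL i).1) ∧ (∀ j, ¬ (IHR j (mk yl yr yL yR)).1))) y) x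

instance : LE PGame.{u} := ⟨fun x y => (leAux x y).1⟩

/-- Two pre-games are equivalent if each is `≤` the other. -/
def Equiv (x y : PGame.{u}) : Prop := x ≤ y ∧ y ≤ x

instance : HasEquiv PGame.{u} := ⟨Equiv⟩

instance : Zero PGame.{u} := ⟨⟨PEmpty, PEmpty, PEmpty.elim, PEmpty.elim⟩⟩

/-- The pre-game `* = {0|0}`. -/
def star : PGame.{u} := ⟨PUnit, PUnit, fun _ => 0, fun _ => 0⟩

/-- The pre-game with the given lists of left and right options. -/
def ofLists (L R : List PGame.{u}) : PGame.{u} :=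
  mk (ULift (Fin L.length)) (ULift (Fin R.length)) (fun i => L.get i.down) fun j => R.get j.down

end PGame

end SetTheory

open SetTheory PGame

inductive Cell | x | o | e
deriving DecidableEq

abbrev Pos := List Cell

/-- All positions reachable by one move of the player with stones `me`
clobbering an adjacent stone of the opponent `opp`. -/
def movesAux (me opp : Cell) : Pos → List Pos
  | a :: b :: rest =>
      (if a = me ∧ b = opp then [Cell.e :: me :: rest] else []) ++
      (if a = opp ∧ b = me then [me :: Cell.e :: rest] else []) ++
      (movesAux me opp (b :: rest)).map (a :: ·)
  | _ => []

def leftMoves (p : Pos) : List Pos := movesAux Cell.x Cell.o p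
def rightMoves (p : Pos) : List Pos := movesAux Cell.o Cell.x p

def stones (p : Pos) : Nat := p.countP (· != Cell.e)

/-- Game value of a clobber position, via fuel recursion (each move removes one stone). -/
def valueFuel : Nat → Pos → PGame
  | 0, _ => 0
  | n+1, p => PGame.ofLists ((leftMoves p).map (valueFuel n)) ((rightMoves p).map (valueFuel n))

def value (p : Pos) : PGame := valueFuel (stones p) p

namespace SetTheory.PGame

def LeftMoves : PGame.{u} → Type u
  | mk l _ _ _ => l

def RightMoves : PGame.{u} → Type u
  | mk _ r _ _ => r

def moveLeft : (x : PGame.{u}) → x.LeftMoves → PGame.{u}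
  | mk _ _ L _ => L

def moveRight : (x : PGame.{u}) → x.RightMoves → PGame.{u}
  | mk _ _ _ R => R

theorem leAux_mk {xl xr : Type u} {xL : xl → PGame.{u}} {xR : xr → PGame.{u}}
    {yl yr : Type u} {yL : yl → PGame.{u}} {yR : yr → PGame.{u}} :
    leAux (mk xl xr xL xR) (mk yl yr yL yR) =
      ((∀ i, ¬ (leAux (xL i) (mk yl yr yL yR)).2) ∧ (∀ j, ¬ (leAux (mk xl xr xL xR) (yR j)).2),
       (∀ i, ¬ (leAux (mk xl xr xL xR) (yL i)).1) ∧ (∀ j, ¬ (leAux (xR j) (mk yl yr yL yR)).1)) :=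
  rfl

theorem leAux_swap (x y : PGame.{u}) : (leAux x y).swap = leAux y x := by
  induction x generalizing y with
  | mk xl xr xL xR IHL IHR =>
    induction y with
    | mk yl yr yL yR JL JR =>
      simp only [leAux_mk, Prod.swap_prod_mk, ← IHL, ← IHR, ← JL, ← JR, Prod.fst_swap, Prod.snd_swap]

theorem le_def {x y : PGame.{u}} :
    x ≤ y ↔ (∀ i, ¬ y ≤ x.moveLeft i) ∧ ∀ j, ¬ y.moveRight j ≤ x := by
  obtain ⟨xl, xr, xL, xR⟩ := x
  obtain ⟨yl, yr, yL, yR⟩ := y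
  change (leAux _ _).1 ↔ (∀ i, ¬ (leAux _ (xL i)).1) ∧ ∀ j, ¬ (leAux (yR j) _).1
  simp only [leAux_mk, ← leAux_swap _ (xL _), ← leAux_swap (yR _), Prod.snd_swap]

theorem le_of_isEmpty {x y : PGame.{u}} [IsEmpty x.LeftMoves] [IsEmpty y.RightMoves] : x ≤ y :=
  le_def.2 ⟨isEmptyElim, isEmptyElim⟩

def IsTerminal (x : PGame.{u}) : Prop :=
  IsEmpty x.LeftMoves ∧ IsEmpty x.RightMoves

theorem IsTerminal.le {x y : PGame.{u}} (hx : x.IsTerminal) (hy : y.IsTerminal) : x ≤ y :=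
  have := hx.1
  have := hy.2
  le_of_isEmpty

structure IsStarLike (x : PGame.{u}) : Prop where
  nonempty_leftMoves : Nonempty x.LeftMoves
  nonempty_rightMoves : Nonempty x.RightMoves
  isTerminal_moveLeft (i : x.LeftMoves) : (x.moveLeft i).IsTerminal
  isTerminal_moveRight (j : x.RightMoves) : (x.moveRight j).IsTerminal

theorem IsStarLike.le {x y : PGame.{u}} (hx : x.IsStarLike) (hy : y.IsStarLike) : x ≤ y := by
  refine le_def.2 ⟨fun i hle => ?_, fun j hle => ?_⟩
  · obtain ⟨i'⟩ := hy.nonempty_leftMoves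
    exact (le_def.1 hle).1 i' ((hx.isTerminal_moveLeft i).le (hy.isTerminal_moveLeft i'))
  · obtain ⟨j'⟩ := hx.nonempty_rightMoves
    exact (le_def.1 hle).2 j' ((hx.isTerminal_moveRight j').le (hy.isTerminal_moveRight j))

theorem IsStarLike.equiv {x y : PGame.{u}} (hx : x.IsStarLike) (hy : y.IsStarLike) : x ≈ y :=
  ⟨hx.le hy, hy.le hx⟩

theorem isTerminal_zero : (0 : PGame.{u}).IsTerminal :=
  ⟨inferInstanceAs (IsEmpty PEmpty), inferInstanceAs (IsEmpty PEmpty)⟩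

theorem isStarLike_star : star.{u}.IsStarLike :=
  ⟨⟨PUnit.unit⟩, ⟨PUnit.unit⟩, fun _ => isTerminal_zero, fun _ => isTerminal_zero⟩

theorem isTerminal_ofLists_nil : (ofLists.{u} [] []).IsTerminal :=
  ⟨inferInstanceAs (IsEmpty (ULift (Fin 0))), inferInstanceAs (IsEmpty (ULift (Fin 0)))⟩

theorem isStarLike_ofLists {L R : List PGame.{u}} (hL : L ≠ []) (hR : R ≠ [])
    (hLt : ∀ g ∈ L, g.IsTerminal) (hRt : ∀ g ∈ R, g.IsTerminal) : (ofLists L R).IsStarLike where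
  nonempty_leftMoves := ⟨⟨⟨0, List.length_pos_iff.2 hL⟩⟩⟩
  nonempty_rightMoves := ⟨⟨⟨0, List.length_pos_iff.2 hR⟩⟩⟩
  isTerminal_moveLeft _ := hLt _ (List.get_mem _ _)
  isTerminal_moveRight _ := hRt _ (List.get_mem _ _)

end SetTheory.PGame

theorem isStarLike_value_ox : (value.{u} [Cell.o, Cell.x]).IsStarLike := by
  change (ofLists [ofLists [] []] [ofLists [] []]).IsStarLike
  exact isStarLike_ofLists (by simp) (by simp) (by simp [isTerminal_ofLists_nil])
    (by simp [isTerminal_ofLists_nil])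

-- Left's captures give `xeo` and `oex`, Right's give `eoo` and `ooe`.
theorem isStarLike_value_oxo : (value.{u} [Cell.o, Cell.x, Cell.o]).IsStarLike := by
  change (ofLists [ofLists [] [], ofLists [] []] [ofLists [] [], ofLists [] []]).IsStarLike
  exact isStarLike_ofLists (by simp) (by simp) (by simp [isTerminal_ofLists_nil])
    (by simp [isTerminal_ofLists_nil])

/-- The clobber position `oxo` is equivalent to `ox`, which is the game `* = {0|0}`. -/
theorem oxo_equiv_ox_star :
    value [Cell.o, Cell.x, Cell.o] ≈ value [Cell.o, Cell.x] ∧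
    value [Cell.o, Cell.x] ≈ star :=
  ⟨isStarLike_value_oxo.equiv isStarLike_value_ox, isStarLike_value_ox.equiv isStarLike_star⟩
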